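/- Let t ≥ 2 be even. Consider binary strings δ' obtained by prepending a single 0 to an arbitrary binary string δ of length m. If m ≥ ((t+2)/2)·((t+4)/2) − 3, then δ' = 0δ contains a usable zero-run with respect to parameter t: writing δ' = η₁ 1 ⋯ 1 η_c, some zero-run η_j of positive length γ_j satisfies α_j + β_j + γ_j ≥ t, or δ' contains t non-overlapping 11 substrings. Consequently, performing ((t+2)/2)·((t+4)/2) − 2 rounds of syndrome measurement suffices for the weak adaptive decoder in the case of trivial first-round syndrome. -/

import Mathlib

/-- Greedy count of non-overlapping `11` substrings plus remaining single ones. -/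
def onesCount : List Bool → ℕ
  | [] => 0
  | false :: l => onesCount l
  | [true] => 1
  | true :: _ :: l => 1 + onesCount l

/-- Greedy count of non-overlapping `11` substrings. -/
def elevenCount : List Bool → ℕ
  | [] => 0
  | [_] => 0
  | true :: true :: l => 1 + elevenCount l
  | _ :: b :: l => elevenCount (b :: l)

/-- The string contains a usable zero-run: a zero-run of positive length `γ` with
`α + β + γ ≥ t`, where `α`, `β` count non-overlapping `11` substrings plus remaining
ones strictly before and after the block `1 0^γ 1` (boundary conventions included). -/
def ExistsUsableRun (t : ℕ) (L : List Bool) : Prop :=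
  (∃ A B γ, 0 < γ ∧ L = A ++ [true] ++ List.replicate γ false ++ [true] ++ B ∧
      t ≤ onesCount A + onesCount B + γ) ∨
  (∃ B γ, 0 < γ ∧ L = List.replicate γ false ++ [true] ++ B ∧ t ≤ onesCount B + γ) ∨
  (∃ A γ, 0 < γ ∧ L = A ++ [true] ++ List.replicate γ false ∧ t ≤ onesCount A + γ) ∨
  (∃ γ, 0 < γ ∧ L = List.replicate γ false ∧ t ≤ γ)

/-!
Write `0δ = 0^g₁ 1^b₁ ⋯ 0^g_r 1^b_r` with maximal runs and let `S = Σ ⌈b_j/2⌉`, the value of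
`onesCount` on the whole string. Around the `j`-th zero-run, `α_j ≥ Σ_{i<j} ⌈b_i/2⌉ - [j > 1]`
and `β_j = ⌊b_j/2⌋ + Σ_{i>j} ⌈b_i/2⌉`, so if no zero-run is usable then
`g_j + b_j + S + [j = 1] ≤ t + 2⌈b_j/2⌉`. Summing over the `r ≤ S + 1` zero-runs gives
`|0δ| + 1 ≤ r (t - S) + 2S ≤ (S + 1)(t - S) + 2S ≤ ⌊(t + 1)²/4⌋ + t`, which for `t = 2k` is
`k² + 3k`, contradicting `|0δ| ≥ k² + 3k`. Hence a usable zero-run always exists.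
-/

open List

-- A trailing single `1` of `X` is paired with the first letter of `Y`, harmless when that is a `0`.
theorem onesCount_append {X Y : List Bool} (hY : Y.head? ≠ some true) :
    onesCount (X ++ Y) = onesCount X + onesCount Y := by
  fun_induction onesCount X with
  | case1 => simp
  | case2 l ih => simpa [onesCount] using ih
  | case3 =>
    match Y, hY with
    | [], _ => rfl
    | false :: Y, _ => simp [onesCount]
  | case4 _ l ih => simp [onesCount, ih]; omega

theorem onesCount_replicate_false_append (g : ℕ) (M : List Bool) :
    onesCount (replicate g false ++ M) = onesCount M := by
  induction g with
  | zero => rfl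
  | succ g ih => exact ih

theorem onesCount_replicate_true : ∀ b, onesCount (replicate b true) = (b + 1) / 2
  | 0 => rfl
  | 1 => rfl
  | b + 2 => by
    rw [replicate_succ, replicate_succ, onesCount, onesCount_replicate_true b]
    omega

theorem onesCount_tail_replicate_true_append (b : ℕ) {M : List Bool}
    (hM : M.head? ≠ some true) :
    onesCount (replicate b true ++ M).tail = b / 2 + onesCount M := by
  cases b with
  | zero =>
    match M, hM with
    | [], _ => rfl
    | false :: _, _ => simp [onesCount]
  | succ b => simp [replicate_succ, onesCount_append hM, onesCount_replicate_true]

theorem onesCount_le_onesCount_dropLast_add_one (X : List Bool) :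
    onesCount X ≤ onesCount X.dropLast + 1 := by
  fun_induction onesCount X with
  | case1 => simp
  | case2 l ih =>
    match l with
    | [] => simp [onesCount]
    | _ :: _ => simpa [onesCount] using ih
  | case3 => simp [onesCount]
  | case4 _ l ih =>
    match l with
    | [] => simp [onesCount]
    | _ :: _ => simp only [dropLast_cons_cons, onesCount]; omega

theorem existsUsableRun_of_le {t g : ℕ} {X Y : List Bool} (hg : 0 < g)
    (hX : X.getLast? ≠ some false) (hY : Y.head? ≠ some false)
    (h : t ≤ onesCount X.dropLast + onesCount Y.tail + g) :
    ExistsUsableRun t (X ++ replicate g false ++ Y) := by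
  rcases X.eq_nil_or_concat with rfl | ⟨A, x, rfl⟩ <;> rcases Y with _ | ⟨y, B⟩
  · exact Or.inr (Or.inr (Or.inr ⟨g, hg, by simp, by simpa [onesCount] using h⟩))
  · obtain rfl : y = true := by simpa using hY
    exact Or.inr (Or.inl ⟨B, g, hg, by simp, by simpa [onesCount] using h⟩)
  · obtain rfl : x = true := by simpa using hX
    exact Or.inr (Or.inr (Or.inl ⟨A, g, hg, by simp, by simpa [onesCount] using h⟩))
  · obtain rfl : x = true := by simpa using hX
    obtain rfl : y = true := by simpa using hY
    exact Or.inl ⟨A, B, g, hg, by simp, by simpa [onesCount] using h⟩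

/-- `ofRuns [(g₁, b₁), …, (g_r, b_r)] = 0^g₁ 1^b₁ ⋯ 0^g_r 1^b_r`. -/
def ofRuns (l : List (ℕ × ℕ)) : List Bool :=
  l.flatMap fun p => replicate p.1 false ++ replicate p.2 true

/-- The runs of `ofRuns l` are maximal, and there are `l.length` zero-runs. -/
def MaximalRuns (l : List (ℕ × ℕ)) : Prop :=
  (∀ p ∈ l, 0 < p.1) ∧ ∀ p ∈ l.dropLast, 0 < p.2

theorem ofRuns_cons (p : ℕ × ℕ) (l : List (ℕ × ℕ)) :
    ofRuns (p :: l) = replicate p.1 false ++ (replicate p.2 true ++ ofRuns l) := by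
  simp [ofRuns]

theorem ofRuns_append_cons (pre post : List (ℕ × ℕ)) (g b : ℕ) :
    ofRuns (pre ++ (g, b) :: post) =
      ofRuns pre ++ replicate g false ++ (replicate b true ++ ofRuns post) := by
  simp [ofRuns]

theorem length_ofRuns (l : List (ℕ × ℕ)) :
    (ofRuns l).length = (l.map fun p => p.1 + p.2).sum := by
  simp [ofRuns, length_flatMap]

theorem head?_ofRuns_ne {l : List (ℕ × ℕ)} (hl : ∀ p ∈ l, 0 < p.1) :
    (ofRuns l).head? ≠ some true := by
  rcases l with _ | ⟨⟨g, b⟩, l⟩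
  · simp [ofRuns]
  · obtain ⟨g, rfl⟩ := Nat.exists_eq_add_one_of_ne_zero (hl (g, b) mem_cons_self).ne'
    simp [ofRuns, replicate_succ]

theorem getLast?_ofRuns_ne {l : List (ℕ × ℕ)} (hl : ∀ p ∈ l, 0 < p.2) :
    (ofRuns l).getLast? ≠ some false := by
  rcases l.eq_nil_or_concat with rfl | ⟨l, ⟨g, b⟩, rfl⟩
  · simp [ofRuns]
  · have hb : b ≠ 0 := (hl (g, b) (by simp)).ne'
    simp [ofRuns, getLast?_append, getLast?_replicate, hb]

theorem onesCount_ofRuns {l : List (ℕ × ℕ)} (hl : ∀ p ∈ l, 0 < p.1) :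
    onesCount (ofRuns l) = (l.map fun p => (p.2 + 1) / 2).sum := by
  induction l with
  | nil => rfl
  | cons p l ih =>
    have hl' : ∀ q ∈ l, 0 < q.1 := fun q hq => hl q (mem_cons_of_mem p hq)
    rw [ofRuns_cons, onesCount_replicate_false_append, onesCount_append (head?_ofRuns_ne hl'),
      onesCount_replicate_true, ih hl', map_cons, sum_cons]

theorem exists_replicate_true_append_ofRuns (L : List Bool) :
    ∃ n l, MaximalRuns l ∧ L = replicate n true ++ ofRuns l := by
  induction L with
  | nil => exact ⟨0, [], by simp [MaximalRuns], rfl⟩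
  | cons a L ih =>
    obtain ⟨n, l, ⟨hg, hb⟩, rfl⟩ := ih
    cases a with
    | true => exact ⟨n + 1, l, ⟨hg, hb⟩, rfl⟩
    | false =>
      refine ⟨0, ?_⟩
      rcases n with _ | n
      · rcases l with _ | ⟨⟨g, b⟩, l⟩
        · exact ⟨[(1, 0)], by simp [MaximalRuns], by simp [ofRuns]⟩
        · refine ⟨(g + 1, b) :: l, ⟨?_, ?_⟩, by simp [ofRuns_cons, replicate_succ]⟩
          · exact forall_mem_cons.2 ⟨g.succ_pos, (forall_mem_cons.1 hg).2⟩
          · rcases l with _ | ⟨q, l⟩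
            · simp
            · simpa using hb
      · refine ⟨(1, n + 1) :: l, ⟨?_, ?_⟩, by simp [ofRuns_cons]⟩
        · simpa using hg
        · rcases l with _ | ⟨q, l⟩
          · simp
          · simpa using hb

theorem exists_ofRuns {L : List Bool} (hL : L.head? ≠ some true) :
    ∃ l, MaximalRuns l ∧ L = ofRuns l := by
  obtain ⟨n, l, hl, rfl⟩ := exists_replicate_true_append_ofRuns L
  rcases n with _ | n
  · exact ⟨l, hl, rfl⟩
  · simp [replicate_succ] at hL

theorem MaximalRuns.onesCount_dropLast_add_lt {t g b : ℕ} {pre post : List (ℕ × ℕ)}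
    (hl : MaximalRuns (pre ++ (g, b) :: post))
    (h : ¬ ExistsUsableRun t (ofRuns (pre ++ (g, b) :: post))) :
    onesCount (ofRuns pre).dropLast + b / 2 + onesCount (ofRuns post) + g < t := by
  obtain ⟨hg, hb⟩ := hl
  have hpre : ∀ p ∈ pre, 0 < p.2 := fun p hp => hb p (by simp [hp])
  have hpost : ∀ p ∈ post, 0 < p.1 := fun p hp => hg p (by simp [hp])
  have hY : (replicate b true ++ ofRuns post).head? ≠ some false := by
    rcases post with _ | ⟨q, post⟩
    · cases b <;> simp [ofRuns, replicate_succ]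
    · have : 0 < b := hb (g, b) (by simp)
      obtain ⟨b, rfl⟩ := Nat.exists_eq_add_one_of_ne_zero this.ne'
      simp [replicate_succ]
  by_contra! hle
  refine h ?_
  rw [ofRuns_append_cons]
  refine existsUsableRun_of_le (hg (g, b) (by simp)) (getLast?_ofRuns_ne hpre) hY ?_
  rw [onesCount_tail_replicate_true_append b (head?_ofRuns_ne hpost)]
  omega

theorem onesCount_ofRuns_append_cons {pre post : List (ℕ × ℕ)} {g b : ℕ}
    (hl : ∀ p ∈ pre ++ (g, b) :: post, 0 < p.1) :
    onesCount (ofRuns (pre ++ (g, b) :: post)) =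
      onesCount (ofRuns pre) + (b + 1) / 2 + onesCount (ofRuns post) := by
  rw [onesCount_ofRuns hl, onesCount_ofRuns fun p hp => hl p (by simp [hp]),
    onesCount_ofRuns fun p hp => hl p (by simp [hp])]
  simp [add_assoc]

theorem MaximalRuns.add_le_of_mem {t g b : ℕ} {l : List (ℕ × ℕ)} (hl : MaximalRuns l)
    (h : ¬ ExistsUsableRun t (ofRuns l)) (hp : (g, b) ∈ l) :
    g + b + onesCount (ofRuns l) ≤ t + 2 * ((b + 1) / 2) := by
  obtain ⟨pre, post, rfl⟩ := append_of_mem hp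
  have hrun := hl.onesCount_dropLast_add_lt h
  have hdrop := onesCount_le_onesCount_dropLast_add_one (ofRuns pre)
  rw [onesCount_ofRuns_append_cons hl.1]
  omega

theorem MaximalRuns.add_lt_of_eq_cons {t g b : ℕ} {l rest : List (ℕ × ℕ)} (hl : MaximalRuns l)
    (h : ¬ ExistsUsableRun t (ofRuns l)) (hcons : l = (g, b) :: rest) :
    g + b + onesCount (ofRuns l) < t + 2 * ((b + 1) / 2) := by
  subst hcons
  rw [← nil_append ((g, b) :: rest)] at hl h ⊢
  have hrun := hl.onesCount_dropLast_add_lt h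
  rw [onesCount_ofRuns_append_cons hl.1]
  simp only [ofRuns, flatMap_nil, dropLast_nil, onesCount] at hrun ⊢
  omega

theorem sum_add_length_mul_le {S t : ℕ} {l : List (ℕ × ℕ)}
    (h : ∀ p ∈ l, p.1 + p.2 + S ≤ t + 2 * ((p.2 + 1) / 2)) :
    (l.map fun p => p.1 + p.2).sum + l.length * S ≤
      l.length * t + 2 * (l.map fun p => (p.2 + 1) / 2).sum := by
  induction l with
  | nil => simp
  | cons p l ih =>
    have hp := h p mem_cons_self
    have hl := ih fun q hq => h q (mem_cons_of_mem p hq)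
    simp only [map_cons, sum_cons, length_cons, Nat.succ_mul]
    omega

theorem MaximalRuns.length_ofRuns_add_one_le {t : ℕ} {l : List (ℕ × ℕ)} (hl : MaximalRuns l)
    (hne : l ≠ []) (h : ¬ ExistsUsableRun t (ofRuns l)) :
    onesCount (ofRuns l) < t ∧
      (ofRuns l).length + 1 + l.length * onesCount (ofRuns l) ≤
        l.length * t + 2 * onesCount (ofRuns l) := by
  obtain ⟨⟨g, b⟩, rest, hcons⟩ := exists_cons_of_ne_nil hne
  have hhead := hl.add_lt_of_eq_cons h hcons
  have hg : 0 < g := hl.1 (g, b) (by simp [hcons])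
  have hrest := sum_add_length_mul_le (S := onesCount (ofRuns l)) (t := t) (l := rest)
    fun p hp => hl.add_le_of_mem h (by simp [hcons, hp])
  rw [onesCount_ofRuns hl.1] at hhead hrest ⊢
  rw [length_ofRuns]
  subst hcons
  simp only [map_cons, sum_cons, length_cons, Nat.succ_mul] at hhead hrest ⊢
  omega

theorem MaximalRuns.length_le_onesCount_add_one {l : List (ℕ × ℕ)} (hl : MaximalRuns l) :
    l.length ≤ onesCount (ofRuns l) + 1 := by
  rw [onesCount_ofRuns hl.1]
  obtain ⟨-, hb⟩ := hl
  induction l with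
  | nil => simp
  | cons p l ih =>
    rcases l with _ | ⟨q, l⟩
    · simp
    · rw [dropLast_cons_cons, forall_mem_cons] at hb
      have := ih hb.2
      simp only [map_cons, sum_cons, length_cons] at this ⊢
      omega

theorem succ_mul_sub_add_two_mul_le {s t : ℕ} (h : s ≤ t) :
    (s + 1) * (t - s) + 2 * s ≤ (t + 1) ^ 2 / 4 + t := by
  suffices ((s + 1) * (t - s) + 2 * s) * 4 ≤ (t + 1) ^ 2 + t * 4 by
    rw [← Nat.add_mul_div_right _ _ four_pos]
    exact (Nat.le_div_iff_mul_le four_pos).2 this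
  obtain ⟨d, rfl⟩ := Nat.exists_eq_add_of_le h
  rw [Nat.add_sub_cancel_left]
  zify
  nlinarith [sq_nonneg ((d : ℤ) - s + 1)]

theorem length_add_one_le_of_not_existsUsableRun {t : ℕ} {L : List Bool}
    (hL : L.head? = some false) (h : ¬ ExistsUsableRun t L) :
    L.length + 1 ≤ (t + 1) ^ 2 / 4 + t := by
  obtain ⟨l, hl, rfl⟩ := exists_ofRuns (L := L) (by simp [hL])
  have hne : l ≠ [] := by rintro rfl; simp [ofRuns] at hL
  obtain ⟨hSt, hsum⟩ := hl.length_ofRuns_add_one_le hne h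
  have hr := hl.length_le_onesCount_add_one
  set S := onesCount (ofRuns l)
  have hsplit : l.length * t = l.length * S + l.length * (t - S) := by
    rw [← Nat.mul_add, Nat.add_sub_cancel' hSt.le]
  calc (ofRuns l).length + 1 ≤ l.length * (t - S) + 2 * S := by omega
    _ ≤ (S + 1) * (t - S) + 2 * S := by gcongr
    _ ≤ (t + 1) ^ 2 / 4 + t := succ_mul_sub_add_two_mul_le hSt.le

theorem weak_decoder_stops_even_general (t : ℕ) (heven : Even t) (δ : List Bool)
    (hlen : ((t + 2) / 2) * ((t + 4) / 2) - 3 ≤ δ.length) :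
    ExistsUsableRun t (false :: δ) ∨ t ≤ elevenCount (false :: δ) := by
  refine Or.inl (by_contra fun h => ?_)
  have hbound := length_add_one_le_of_not_existsUsableRun (L := false :: δ) rfl h
  obtain ⟨k, rfl⟩ := heven
  have hround : (k + k + 2) / 2 * ((k + k + 4) / 2) = k * k + 3 * k + 2 := by
    rw [show (k + k + 2) / 2 = k + 1 by omega, show (k + k + 4) / 2 = k + 2 by omega]
    ring
  have hquarter : (k + k + 1) ^ 2 / 4 = k * k + k := by
    rw [show (k + k + 1) ^ 2 = 4 * (k * k + k) + 1 by ring]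
    omega
  rw [length_cons] at hbound
  omega

/-- Weak adaptive decoder, even `t`, trivial first syndrome: if `δ` has length at least
`((t+2)/2)·((t+4)/2) − 3`, then the extended difference vector `0δ` contains a usable
zero-run with respect to `t`, or `t` non-overlapping `11` substrings. -/
theorem weak_decoder_stops_even (t : ℕ) (ht : 2 ≤ t) (heven : Even t) (δ : List Bool)
    (hlen : ((t + 2) / 2) * ((t + 4) / 2) - 3 ≤ δ.length) :
    ExistsUsableRun t (false :: δ) ∨ t ≤ elevenCount (false :: δ) :=
  weak_decoder_stops_even_general t heven δ hlen
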